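/- arXiv:2203.02726 — 2 statements merged into one kernel-verified Lean document; each statement's English description precedes it below -/
import Mathlib

section
/- Let f : F_q^d → F_q be a bipermutive local rule of diameter d, and let F : F_q^{2(d-1)} → F_q^{d-1} be the no-boundary cellular automaton defined by F(x_1,...,x_{2(d-1)}) = (f(x_1,...,x_d),...,f(x_{d-1},...,x_{2(d-1)})). Then the square S_F defined by S_F(x,y) = F(x‖y) for x,y ∈ F_q^{d-1} is a Latin square of order q^{d-1}, i.e., for each fixed x the map y ↦ F(x‖y) is a bijection of F_q^{d-1}, and for each fixed y the map x ↦ F(x‖y) is a bijection of F_q^{d-1}. -/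
set_option maxHeartbeats 1000000

/-- A no-boundary CA `F : F_q^{2(d-1)} → F_q^{d-1}` defined by a
bipermutive local rule `f` of diameter `d` generates a Latin square of order
`q^{d-1}`: each row map `y ↦ F(x‖y)` and each column map `x ↦ F(x‖y)` is a
bijection of `F_q^{d-1}`. Here `d = m + 2`, so `d - 1 = m + 1`. -/
theorem stmt2 (K : Type*) [Field K] [Fintype K] (m : ℕ)
    (f : (Fin (m + 2) → K) → K)
    (hbip : ∀ xt : Fin (m + 1) → K,
        Function.Bijective (fun x' : K => f (Fin.snoc xt x')) ∧
        Function.Bijective (fun x' : K => f (Fin.cons x' xt)))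
    (F : (Fin ((m + 1) + (m + 1)) → K) → Fin (m + 1) → K)
    (hF : ∀ (s : Fin ((m + 1) + (m + 1)) → K) (i : Fin (m + 1)),
      F s i = f (fun j : Fin (m + 2) =>
        s ⟨i.val + j.val, by have := i.isLt; have := j.isLt; omega⟩)) :
    (∀ x : Fin (m + 1) → K,
        Function.Bijective (fun y : Fin (m + 1) → K => F (Fin.append x y))) ∧
    (∀ y : Fin (m + 1) → K,
        Function.Bijective (fun x : Fin (m + 1) → K => F (Fin.append x y))) := by
  have app : ∀ (x y : Fin (m+1) → K) (k : Fin ((m+1)+(m+1))),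
      Fin.append x y k = if h : k.1 < m + 1 then x ⟨k.1, h⟩
        else y ⟨k.1 - (m+1), by omega⟩ := by
    intro x y k
    rcases k with ⟨k, hk⟩
    by_cases h : k < m + 1
    · rw [dif_pos h]
      conv_lhs => rw [show (⟨k, hk⟩ : Fin ((m+1)+(m+1))) = Fin.castAdd (m+1) ⟨k, h⟩ from rfl,
        Fin.append_left]
    · rw [dif_neg h]
      conv_lhs => rw [show (⟨k, hk⟩ : Fin ((m+1)+(m+1)))
          = Fin.natAdd (m+1) ⟨k - (m+1), by omega⟩ from (by simp [Fin.natAdd]; omega),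
        Fin.append_right]
  constructor
  · intro x
    rw [← Finite.injective_iff_bijective]
    intro y y' h
    simp only at h
    suffices H : ∀ n (hn : n < m+1), y ⟨n, hn⟩ = y' ⟨n, hn⟩ by
      funext i; exact H i.1 i.2
    intro n
    induction n using Nat.strong_induction_on with
    | _ n ih =>
      intro hn
      have h1 := congrFun h ⟨n, hn⟩
      rw [hF, hF] at h1
      set xt : Fin (m+1) → K := fun j => Fin.append x y ⟨n + j.1, by omega⟩ with hxt
      have hw : ∀ z : Fin (m+1) → K,
          (∀ j (hj : j < n) (hj' : j < m+1), y ⟨j, hj'⟩ = z ⟨j, hj'⟩) →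
          (fun j : Fin (m+2) => Fin.append x z
            ⟨(⟨n, hn⟩ : Fin (m+1)).1 + j.1, by omega⟩)
          = Fin.snoc xt (z ⟨n, hn⟩) := by
        intro z hz
        funext j
        refine Fin.lastCases ?_ ?_ j
        · rw [Fin.snoc_last]
          simp only [Fin.val_last]
          rw [app]; simp only [Fin.val_mk]; rw [dif_neg (by omega)]
          exact congrArg z (Fin.ext (by simp))
        · intro j
          rw [Fin.snoc_castSucc, hxt]
          simp only [Fin.coe_castSucc]
          rw [app, app]; simp only [Fin.val_mk]
          by_cases hc : n + j.1 < m + 1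
          · rw [dif_pos hc, dif_pos hc]
          · rw [dif_neg hc, dif_neg hc]
            exact (hz (n + j.1 - (m+1)) (by omega) (by omega)).symm
      rw [hw y (fun j hj hj' => rfl), hw y' (fun j hj hj' => ih j hj hj')] at h1
      exact (hbip xt).1.injective h1
  · intro y
    rw [← Finite.injective_iff_bijective]
    intro x x' h
    simp only at h
    suffices H : ∀ t n (hn : n < m+1), m - n = t → x ⟨n, hn⟩ = x' ⟨n, hn⟩ by
      funext i; exact H (m - i.1) i.1 i.2 rfl
    intro t
    induction t using Nat.strong_induction_on with
    | _ t ih =>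
      intro n hn ht
      have h1 := congrFun h ⟨n, hn⟩
      rw [hF, hF] at h1
      set yt : Fin (m+1) → K := fun j => Fin.append x y ⟨n + (j.1 + 1), by omega⟩ with hyt
      have hw : ∀ z : Fin (m+1) → K,
          (∀ j (hj : n < j) (hj' : j < m+1), x ⟨j, hj'⟩ = z ⟨j, hj'⟩) →
          (fun j : Fin (m+2) => Fin.append z y
            ⟨(⟨n, hn⟩ : Fin (m+1)).1 + j.1, by omega⟩)
          = Fin.cons (z ⟨n, hn⟩) yt := by
        intro z hz
        funext j
        refine Fin.cases ?_ ?_ j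
        · rw [Fin.cons_zero]
          simp only [Fin.val_zero]
          rw [app]; simp only [Fin.val_mk]; rw [dif_pos (by omega)]
          exact congrArg z (Fin.ext (by simp))
        · intro j
          rw [Fin.cons_succ, hyt]
          simp only [Fin.val_succ]
          rw [app, app]; simp only [Fin.val_mk]
          by_cases hc : n + (j.1 + 1) < m + 1
          · rw [dif_pos hc, dif_pos hc]
            exact (hz (n + (j.1 + 1)) (by omega) hc).symm
          · rw [dif_neg hc, dif_neg hc]
      rw [hw x (fun j hj hj' => rfl),
          hw x' (fun j hj hj' => ih (m - j) (by omega) j hj' rfl)] at h1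
      exact (hbip yt).2.injective h1
end

section
/- Let f, g : F_q^d → F_q be linear bipermutive local rules with coprime associated polynomials of degree n = d−1, and let M_{f,g} be their 2n×2n Sylvester matrix. If the dynamical system s ↦ M_{f,g}·s on F_q^{2n} contains a cycle of length q^{2n} − 1, then the minimal polynomial of M_{f,g} is primitive of degree 2n, and the system consists exactly of the fixed point 0 and a single cycle of length q^{2n} − 1. -/
/-!
A cycle of length `q ^ N - 1` in `𝔽_q ^ N` must contain every nonzero vector, since `0` is a
fixed point and there are only `q ^ N - 1` other states. Hence `M ^ (q ^ N - 1) = 1` and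
`orderOf M = q ^ N - 1`. The root of `minpoly K M` has the same order, because `AdjoinRoot` of
the minimal polynomial embeds into the matrix ring. In `AdjoinRoot (minpoly K M)`, which has
`q ^ d` elements with `d = natDegree (minpoly K M) ≤ N`, a unit of order `q ^ N - 1` forces
`d = N` and makes every nonzero element a unit, so the quotient is a field and the minimal
polynomial is irreducible.
-/

open Polynomial Function

theorem isField_of_card_le_card_units_add_one {R : Type*} [CommRing R] [Finite R] [Nontrivial R]
    (h : Nat.card R ≤ Nat.card Rˣ + 1) : IsField R := by
  let toNonzero : Rˣ → {r : R // r ≠ 0} := fun u => ⟨u, u.ne_zero⟩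
  have hinj : Injective toNonzero := fun u v huv => Units.val_injective (congrArg Subtype.val huv)
  have hcard : Nat.card {r : R // r ≠ 0} = Nat.card R - 1 := by
    have := Fintype.ofFinite R
    classical simp [Nat.card_eq_fintype_card, Fintype.card_subtype_compl]
  have hsurj := (hinj.bijective_of_nat_card_le (by omega)).2
  refine ⟨exists_pair_ne R, mul_comm, fun {a} ha => ?_⟩
  obtain ⟨u, hu⟩ := hsurj ⟨a, ha⟩
  exact ⟨↑u⁻¹, by rw [← show (u : R) = a from congrArg Subtype.val hu]; exact u.mul_inv⟩

theorem orderOf_root_minpoly {K A : Type*} [Field K] [Ring A] [Algebra K A] (x : A) :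
    orderOf (AdjoinRoot.root (minpoly K x)) = orderOf x := by
  let φ : AdjoinRoot (minpoly K x) →+* A :=
    Ideal.Quotient.lift _ (aeval x).toRingHom fun g hg => by
      obtain ⟨h, rfl⟩ := Ideal.mem_span_singleton'.mp hg
      simp
  have hφ : ∀ g, φ (AdjoinRoot.mk _ g) = aeval x g := fun g => Ideal.Quotient.lift_mk _ _ _
  have hinj : Injective φ := by
    refine (injective_iff_map_eq_zero φ).2 fun y hy => ?_
    obtain ⟨g, rfl⟩ := AdjoinRoot.mk_surjective y
    exact AdjoinRoot.mk_eq_zero.mpr (minpoly.dvd K x (by rwa [hφ] at hy))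
  rw [← orderOf_injective φ.toMonoidHom hinj]
  exact congrArg orderOf ((hφ X).trans (aeval_X x))

namespace AdjoinRoot

variable {K : Type*} [Field K] [Fintype K] {f : K[X]}

theorem natCard_eq_pow_natDegree (hf : f ≠ 0) :
    Nat.card (AdjoinRoot f) = Fintype.card K ^ f.natDegree := by
  have := (powerBasis hf).finite
  rw [Module.natCard_eq_pow_finrank (K := K), (powerBasis hf).finrank, powerBasis_dim,
    Nat.card_eq_fintype_card]

theorem natDegree_eq_and_irreducible_of_orderOf_root (hf : 0 < f.natDegree) {N : ℕ}
    (hN : f.natDegree ≤ N) (hord : orderOf (root f) = Fintype.card K ^ N - 1) :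
    f.natDegree = N ∧ Irreducible f := by
  have hf0 : f ≠ 0 := ne_zero_of_natDegree_gt hf
  have := AdjoinRoot.nontrivial (f := f) (by rw [degree_eq_natDegree hf0]; exact_mod_cast hf.ne')
  have := (powerBasis hf0).finite
  have := Module.finite_of_finite K (M := AdjoinRoot f)
  have hq : 1 < Fintype.card K := Fintype.one_lt_card
  have hcard := natCard_eq_pow_natDegree hf0
  have hdeg : f.natDegree = N := by
    refine le_antisymm hN ((Nat.pow_le_pow_iff_right hq).mp ?_)
    have := orderOf_lt_card (root f)
    omega
  have hunit : IsUnit (root f) := by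
    refine IsOfFinOrder.isUnit (orderOf_pos_iff.mp ?_)
    have := Nat.one_lt_pow (by omega) hq (n := N)
    omega
  have hfield : IsField (AdjoinRoot f) := by
    refine isField_of_card_le_card_units_add_one ?_
    have := orderOf_le_card (x := hunit.unit)
    rw [← orderOf_units, hunit.unit_spec, hord] at this
    rw [hcard, hdeg]
    omega
  exact ⟨hdeg, ((Ideal.span_singleton_prime hf0).mp
    (Ideal.Quotient.maximal_of_isField _ hfield).isPrime).irreducible⟩

end AdjoinRoot

namespace Function

variable {α : Type*} {f : α → α} {x : α}

theorem isLeast_minimalPeriod (hx : 0 < minimalPeriod f x) :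
    IsLeast {n | 0 < n ∧ IsPeriodicPt f n x} (minimalPeriod f x) :=
  ⟨⟨hx, isPeriodicPt_minimalPeriod f x⟩, fun _ hn => hn.2.minimalPeriod_le hn.1⟩

theorem minimalPeriod_eq_of_isLeast {n : ℕ} (h : IsLeast {n | 0 < n ∧ IsPeriodicPt f n x} n) :
    minimalPeriod f x = n := by
  rw [minimalPeriod_eq_sInf_n_pos_IsPeriodicPt]
  exact h.csInf_eq

variable [Fintype α] {z : α}

theorem exists_lt_iterate_eq_of_minimalPeriod_eq_card_sub_one (hz : IsFixedPt f z) (hxz : x ≠ z)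
    (hx : minimalPeriod f x = Fintype.card α - 1) {y : α} (hy : y ≠ z) :
    ∃ k < minimalPeriod f x, f^[k] x = y := by
  set p := minimalPeriod f x
  have hne : ∀ k : Fin p, f^[k] x ≠ z := fun k hk => hxz <|
    calc x = f^[p - k + k] x := by
          rw [Nat.sub_add_cancel k.is_lt.le]; exact (isPeriodicPt_minimalPeriod f x).symm
      _ = z := by rw [iterate_add_apply, hk, (hz.iterate _).eq]
  let orbit : Fin p → {y // y ≠ z} := fun k => ⟨f^[k] x, hne k⟩
  have hinj : Injective orbit := fun i j hij =>
    Fin.ext (iterate_injOn_Iio_minimalPeriod i.is_lt j.is_lt (congrArg Subtype.val hij))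
  obtain ⟨k, hk⟩ := (hinj.bijective_of_nat_card_le (by
    classical simp [hx, Nat.card_eq_fintype_card, Fintype.card_subtype_compl])).2 ⟨y, hy⟩
  exact ⟨k, k.is_lt, congrArg Subtype.val hk⟩

theorem minimalPeriod_eq_of_minimalPeriod_eq_card_sub_one (hz : IsFixedPt f z) (hxz : x ≠ z)
    (hx : minimalPeriod f x = Fintype.card α - 1) {y : α} (hy : y ≠ z) :
    minimalPeriod f y = minimalPeriod f x := by
  obtain ⟨k, hk, rfl⟩ := exists_lt_iterate_eq_of_minimalPeriod_eq_card_sub_one hz hxz hx hy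
  exact minimalPeriod_apply_iterate (minimalPeriod_pos_iff_mem_periodicPts.mp (by omega)) k

theorem exists_iterate_eq_of_minimalPeriod_eq_card_sub_one (hz : IsFixedPt f z) (hxz : x ≠ z)
    (hx : minimalPeriod f x = Fintype.card α - 1) {y w : α} (hy : y ≠ z) (hw : w ≠ z) :
    ∃ k, f^[k] y = w := by
  obtain ⟨i, hi, rfl⟩ := exists_lt_iterate_eq_of_minimalPeriod_eq_card_sub_one hz hxz hx hy
  obtain ⟨j, -, rfl⟩ := exists_lt_iterate_eq_of_minimalPeriod_eq_card_sub_one hz hxz hx hw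
  refine ⟨j + (minimalPeriod f x - i), ?_⟩
  rw [← iterate_add_apply, add_assoc, Nat.sub_add_cancel hi.le, iterate_add_apply,
    iterate_minimalPeriod]

end Function

namespace Matrix

section CommSemiring

variable {R n : Type*} [CommSemiring R] [Fintype n] [DecidableEq n]

theorem pow_mulVec_eq_iterate (M : Matrix n n R) (k : ℕ) (v : n → R) :
    (M ^ k).mulVec v = M.mulVec^[k] v := by
  induction k generalizing v with
  | zero => simp
  | succ k ih => rw [pow_succ', ← mulVec_mulVec, ih, iterate_succ_apply']

theorem setOf_pow_mulVec_eq (M : Matrix n n R) (v : n → R) :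
    {k | 0 < k ∧ (M ^ k).mulVec v = v} = {k | 0 < k ∧ IsPeriodicPt M.mulVec k v} := by
  simp only [pow_mulVec_eq_iterate]
  rfl

theorem pow_eq_one_of_forall_isPeriodicPt {M : Matrix n n R} {k : ℕ}
    (h : ∀ v, IsPeriodicPt M.mulVec k v) : M ^ k = 1 :=
  toLin'.injective <| LinearMap.ext fun v => by
    rw [toLin'_apply, pow_mulVec_eq_iterate, (h v).eq, toLin'_one, LinearMap.id_apply]

end CommSemiring

variable {K n : Type*} [Field K] [Fintype K] [Fintype n] {M : Matrix n n K} {s₀ : n → K}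

theorem ne_zero_of_minimalPeriod_mulVec_eq (hn : 2 ≤ Fintype.card n)
    (hs₀ : minimalPeriod M.mulVec s₀ = Fintype.card K ^ Fintype.card n - 1) : s₀ ≠ 0 := by
  rintro rfl
  have hfix : minimalPeriod M.mulVec 0 = 1 :=
    minimalPeriod_eq_one_iff_isFixedPt.mpr (mulVec_zero M)
  have hq : 2 ≤ Fintype.card K := Fintype.one_lt_card
  have : 2 ^ 2 ≤ Fintype.card K ^ Fintype.card n :=
    (Nat.pow_le_pow_left hq 2).trans (Nat.pow_le_pow_right (by omega) hn)
  omega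

variable [DecidableEq n]

theorem minimalPeriod_mulVec_eq_of_ne_zero (hn : 2 ≤ Fintype.card n)
    (hs₀ : minimalPeriod M.mulVec s₀ = Fintype.card K ^ Fintype.card n - 1) {s : n → K}
    (hs : s ≠ 0) : minimalPeriod M.mulVec s = Fintype.card K ^ Fintype.card n - 1 :=
  hs₀ ▸ minimalPeriod_eq_of_minimalPeriod_eq_card_sub_one (mulVec_zero M)
    (ne_zero_of_minimalPeriod_mulVec_eq hn hs₀) (by rwa [Fintype.card_fun]) hs

theorem isLeast_pow_mulVec_of_ne_zero (hn : 2 ≤ Fintype.card n)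
    (hs₀ : minimalPeriod M.mulVec s₀ = Fintype.card K ^ Fintype.card n - 1) {s : n → K}
    (hs : s ≠ 0) :
    IsLeast {k | 0 < k ∧ (M ^ k).mulVec s = s} (Fintype.card K ^ Fintype.card n - 1) := by
  rw [setOf_pow_mulVec_eq, ← minimalPeriod_mulVec_eq_of_ne_zero hn hs₀ hs]
  refine isLeast_minimalPeriod ?_
  rw [minimalPeriod_mulVec_eq_of_ne_zero hn hs₀ hs]
  have := Nat.one_lt_pow (by omega) (Fintype.one_lt_card (α := K)) (n := Fintype.card n)
  omega

theorem exists_pow_mulVec_eq (hn : 2 ≤ Fintype.card n)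
    (hs₀ : minimalPeriod M.mulVec s₀ = Fintype.card K ^ Fintype.card n - 1) {s t : n → K}
    (hs : s ≠ 0) (ht : t ≠ 0) : ∃ k, (M ^ k).mulVec s = t := by
  simp only [pow_mulVec_eq_iterate]
  exact exists_iterate_eq_of_minimalPeriod_eq_card_sub_one (mulVec_zero M)
    (ne_zero_of_minimalPeriod_mulVec_eq hn hs₀) (by rwa [Fintype.card_fun]) hs ht

theorem orderOf_eq_minimalPeriod_mulVec (hn : 2 ≤ Fintype.card n)
    (hs₀ : minimalPeriod M.mulVec s₀ = Fintype.card K ^ Fintype.card n - 1) :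
    orderOf M = minimalPeriod M.mulVec s₀ := by
  have hpow : M ^ minimalPeriod M.mulVec s₀ = 1 := by
    refine pow_eq_one_of_forall_isPeriodicPt fun s => ?_
    obtain rfl | hs := eq_or_ne s 0
    · exact IsFixedPt.isPeriodicPt (mulVec_zero M) _
    · rw [hs₀, ← minimalPeriod_mulVec_eq_of_ne_zero hn hs₀ hs]
      exact isPeriodicPt_minimalPeriod _ _
  refine Nat.dvd_antisymm (orderOf_dvd_of_pow_eq_one hpow) (IsPeriodicPt.minimalPeriod_dvd ?_)
  rw [IsPeriodicPt, IsFixedPt, ← pow_mulVec_eq_iterate, pow_orderOf_eq_one, one_mulVec]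

theorem orderOf_root_minpoly_eq (hn : 2 ≤ Fintype.card n)
    (hs₀ : minimalPeriod M.mulVec s₀ = Fintype.card K ^ Fintype.card n - 1) :
    orderOf (AdjoinRoot.root (minpoly K M)) = Fintype.card K ^ Fintype.card n - 1 := by
  rw [orderOf_root_minpoly, orderOf_eq_minimalPeriod_mulVec hn hs₀, hs₀]

theorem natDegree_minpoly_eq_and_irreducible (hn : 2 ≤ Fintype.card n)
    (hs₀ : minimalPeriod M.mulVec s₀ = Fintype.card K ^ Fintype.card n - 1) :
    (minpoly K M).natDegree = Fintype.card n ∧ Irreducible (minpoly K M) := by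
  have : Nonempty n := Fintype.card_pos_iff.mp (by omega)
  refine AdjoinRoot.natDegree_eq_and_irreducible_of_orderOf_root
    (minpoly.natDegree_pos (IsIntegral.of_finite K M)) ?_ (orderOf_root_minpoly_eq hn hs₀)
  have h := natDegree_le_of_dvd (minpoly_dvd_charpoly M) (charpoly_monic M).ne_zero
  rwa [charpoly_natDegree_eq_dim] at h

end Matrix

open Polynomial in
theorem stmt18_general (K : Type*) [Field K] [Fintype K] (m : ℕ)
    (M : Matrix (Fin ((m + 1) + (m + 1))) (Fin ((m + 1) + (m + 1))) K)
    (hcycle : ∃ s₀ : Fin ((m + 1) + (m + 1)) → K,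
      IsLeast {k : ℕ | 0 < k ∧ (M ^ k).mulVec s₀ = s₀}
        (Fintype.card K ^ ((m + 1) + (m + 1)) - 1)) :
    Irreducible (minpoly K M) ∧
    orderOf (AdjoinRoot.root (minpoly K M)) =
      Fintype.card K ^ ((m + 1) + (m + 1)) - 1 ∧
    (minpoly K M).natDegree = (m + 1) + (m + 1) ∧
    M.mulVec 0 = 0 ∧
    (∀ s : Fin ((m + 1) + (m + 1)) → K, s ≠ 0 →
      IsLeast {k : ℕ | 0 < k ∧ (M ^ k).mulVec s = s}
        (Fintype.card K ^ ((m + 1) + (m + 1)) - 1)) ∧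
    (∀ s t : Fin ((m + 1) + (m + 1)) → K, s ≠ 0 → t ≠ 0 →
      ∃ k : ℕ, (M ^ k).mulVec s = t) := by
  obtain ⟨s₀, hs₀⟩ := hcycle
  have hn : 2 ≤ Fintype.card (Fin ((m + 1) + (m + 1))) := by
    rw [Fintype.card_fin]; omega
  have hper : minimalPeriod M.mulVec s₀ =
      Fintype.card K ^ Fintype.card (Fin ((m + 1) + (m + 1))) - 1 := by
    rw [Fintype.card_fin]
    exact minimalPeriod_eq_of_isLeast (Matrix.setOf_pow_mulVec_eq M s₀ ▸ hs₀)
  obtain ⟨hdeg, hirr⟩ := Matrix.natDegree_minpoly_eq_and_irreducible hn hper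
  simp only [Fintype.card_fin] at hdeg
  refine ⟨hirr, ?_, hdeg, M.mulVec_zero, fun s hs => ?_,
    fun s t hs ht => Matrix.exists_pow_mulVec_eq hn hper hs ht⟩
  · simpa only [Fintype.card_fin] using Matrix.orderOf_root_minpoly_eq hn hper
  · simpa only [Fintype.card_fin] using Matrix.isLeast_pow_mulVec_of_ne_zero hn hper hs

open Polynomial in
/-- Let `f, g` be linear bipermutive local rules of diameter
`d = m + 2` with coprime associated polynomials `P_f, P_g` of degree
`n = m + 1`, and let `M` be their `2n × 2n` Sylvester matrix. If the dynamical
system `s ↦ M·s` on `F_q^{2n}` contains a cycle of length `q^{2n} - 1`, then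
the minimal polynomial of `M` is primitive (irreducible with root of
multiplicative order `q^{2n} - 1`) of degree `2n`, and the system consists
exactly of the fixed point `0` and a single cycle of length `q^{2n} - 1`
through all nonzero states. -/
theorem stmt18 (K : Type*) [Field K] [Fintype K] (m : ℕ)
    (a b : Fin (m + 2) → K)
    (ha1 : a 0 ≠ 0) (had : a (Fin.last (m + 1)) ≠ 0)
    (hb1 : b 0 ≠ 0) (hbd : b (Fin.last (m + 1)) ≠ 0)
    (Pf Pg : K[X])
    (hPf : Pf = ∑ i : Fin (m + 2), C (a i) * X ^ (i : ℕ))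
    (hPg : Pg = ∑ i : Fin (m + 2), C (b i) * X ^ (i : ℕ))
    (hcop : IsCoprime Pf Pg)
    (M : Matrix (Fin ((m + 1) + (m + 1))) (Fin ((m + 1) + (m + 1))) K)
    (hM : ∀ i j : Fin ((m + 1) + (m + 1)),
      M i j =
        if i.val < m + 1 then
          (if i.val ≤ j.val then Pf.coeff (j.val - i.val) else 0)
        else
          (if i.val - (m + 1) ≤ j.val then Pg.coeff (j.val - (i.val - (m + 1))) else 0))
    (hcycle : ∃ s₀ : Fin ((m + 1) + (m + 1)) → K,
      IsLeast {k : ℕ | 0 < k ∧ (M ^ k).mulVec s₀ = s₀}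
        (Fintype.card K ^ ((m + 1) + (m + 1)) - 1)) :
    Irreducible (minpoly K M) ∧
    orderOf (AdjoinRoot.root (minpoly K M)) =
      Fintype.card K ^ ((m + 1) + (m + 1)) - 1 ∧
    (minpoly K M).natDegree = (m + 1) + (m + 1) ∧
    M.mulVec 0 = 0 ∧
    (∀ s : Fin ((m + 1) + (m + 1)) → K, s ≠ 0 →
      IsLeast {k : ℕ | 0 < k ∧ (M ^ k).mulVec s = s}
        (Fintype.card K ^ ((m + 1) + (m + 1)) - 1)) ∧
    (∀ s t : Fin ((m + 1) + (m + 1)) → K, s ≠ 0 → t ≠ 0 →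
      ∃ k : ℕ, (M ^ k).mulVec s = t) :=
  stmt18_general K m M hcycle
end
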